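/- arXiv:2101.01721 — 2 statements merged into one kernel-verified Lean document; each statement's English description precedes it below -/
import Mathlib

section
/- The permutation ρ_e(n,k) ∈ S_n defined by ρ(1)=n, ρ(i)=i+(n-k) for 2≤i≤k-1, and ρ(i)=i-(k-1) for k≤i≤n is an n-cycle if and only if gcd(n-k, n-1)=1. -/
/-!
Reading positions `0, …, n - 1` modulo `n - 1`, the permutation `ρ_e(n,k)` is the translation by
`c = n - k` of `ZMod (n - 1)`, except that the residue class `0` consists of the two points `0` and
`n - 1`, which `ρ` visits one after the other. If `d = gcd (c, n - 1) > 1`, the residue modulo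
`d` is `ρ`-invariant, so `ρ` is not transitive. If `d = 1`, the orbit of any point meets every
residue class modulo `n - 1`, because `c` generates `ZMod (n - 1)`; the singleton classes then lie
in the orbit, and so do the points `0` and `n - 1`, which are reached from the class of `k - 1`.
-/

/-- `σ` acts on positions `0, …, n - 1`, read modulo `n - 1`, as the translation by `c`, except that
the class `0` is split into the two points `0 ↦ n - 1`. -/
structure Equiv.Perm.IsSplitRotation {n : ℕ} (σ : Equiv.Perm (Fin n)) (c : ℕ) : Prop where
  val_apply_of_val_eq_zero : ∀ x : Fin n, (x : ℕ) = 0 → (σ x : ℕ) = n - 1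
  cast_apply_of_val_ne_zero :
    ∀ x : Fin n, (x : ℕ) ≠ 0 → ((σ x : ℕ) : ZMod (n - 1)) = x + c

theorem Fin.eq_of_natCast_zmod_pred_eq {n : ℕ} {x y : Fin n}
    (hxy : ((x : ℕ) : ZMod (n - 1)) = (y : ℕ)) (hy₀ : (y : ℕ) ≠ 0) (hy : (y : ℕ) < n - 1) :
    x = y := by
  rw [ZMod.natCast_eq_natCast_iff', Nat.mod_eq_of_lt hy] at hxy
  ext
  rcases Nat.lt_or_ge (x : ℕ) (n - 1) with hx | hx
  · rwa [Nat.mod_eq_of_lt hx] at hxy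
  · rw [show (x : ℕ) = n - 1 by omega, Nat.mod_self] at hxy
    omega

namespace Equiv.Perm.IsSplitRotation

variable {n c : ℕ} {σ : Equiv.Perm (Fin n)}

theorem cast_apply_of_dvd (h : σ.IsSplitRotation c) {d : ℕ} (hdc : d ∣ c) (hdn : d ∣ n - 1)
    (x : Fin n) : ((σ x : ℕ) : ZMod d) = x := by
  by_cases hx : (x : ℕ) = 0
  · rw [h.val_apply_of_val_eq_zero x hx, hx, (ZMod.natCast_eq_zero_iff _ _).2 hdn, Nat.cast_zero]
  · have := congrArg (ZMod.castHom hdn (ZMod d)) (h.cast_apply_of_val_ne_zero x hx)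
    rwa [map_natCast, map_add, map_natCast, map_natCast, (ZMod.natCast_eq_zero_iff _ _).2 hdc,
      add_zero] at this

theorem cast_pow_apply_of_dvd (h : σ.IsSplitRotation c) {d : ℕ} (hdc : d ∣ c) (hdn : d ∣ n - 1)
    (m : ℕ) (x : Fin n) : (((σ ^ m) x : ℕ) : ZMod d) = x := by
  induction m with
  | zero => rfl
  | succ m ih => rw [pow_succ', Equiv.Perm.mul_apply, h.cast_apply_of_dvd hdc hdn, ih]

theorem coprime_of_exists_pow_apply_eq (h : σ.IsSplitRotation c) (hn : 2 ≤ n)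
    (htrans : ∀ a b : Fin n, ∃ m : ℕ, (σ ^ m) a = b) : c.Coprime (n - 1) := by
  obtain ⟨m, hm⟩ := htrans ⟨0, by omega⟩ ⟨1, by omega⟩
  have := h.cast_pow_apply_of_dvd (Nat.gcd_dvd_left c (n - 1)) (Nat.gcd_dvd_right c (n - 1)) m
    ⟨0, by omega⟩
  rw [hm] at this
  exact Nat.dvd_one.1 ((ZMod.natCast_eq_zero_iff 1 _).1 (this.trans Nat.cast_zero))

theorem exists_sameCycle_cast_eq_add (h : σ.IsSplitRotation c) (hn : 2 ≤ n) (x : Fin n) :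
    ∃ y, σ.SameCycle x y ∧ ((y : ℕ) : ZMod (n - 1)) = x + c := by
  by_cases hx : (x : ℕ) = 0
  · have hσx := h.val_apply_of_val_eq_zero x hx
    refine ⟨σ (σ x), sameCycle_apply_right.2 (sameCycle_apply_right.2 .rfl), ?_⟩
    rw [h.cast_apply_of_val_ne_zero _ (by omega), hσx, hx, ZMod.natCast_self, Nat.cast_zero]
  · exact ⟨σ x, sameCycle_apply_right.2 .rfl, h.cast_apply_of_val_ne_zero x hx⟩

theorem exists_sameCycle_cast_eq (h : σ.IsSplitRotation c) (hn : 3 ≤ n)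
    (hc : c.Coprime (n - 1)) (x : Fin n) (r : ZMod (n - 1)) :
    ∃ y, σ.SameCycle x y ∧ ((y : ℕ) : ZMod (n - 1)) = r := by
  have hmul : ∀ t : ℕ, ∃ y, σ.SameCycle x y ∧ ((y : ℕ) : ZMod (n - 1)) = x + t * c := by
    intro t
    induction t with
    | zero => exact ⟨x, .rfl, by simp⟩
    | succ t ih =>
      obtain ⟨y, hxy, hy⟩ := ih
      obtain ⟨z, hyz, hz⟩ := h.exists_sameCycle_cast_eq_add (by omega) y
      exact ⟨z, hxy.trans hyz, by rw [hz, hy]; push_cast; ring⟩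
  have : NeZero (n - 1) := ⟨by omega⟩
  obtain ⟨y, hxy, hy⟩ := hmul ((r - x) * (c : ZMod (n - 1))⁻¹).val
  refine ⟨y, hxy, ?_⟩
  rw [hy, ZMod.natCast_zmod_val, mul_assoc, mul_comm _ (c : ZMod (n - 1)),
    ZMod.coe_mul_inv_eq_one c hc]
  ring

theorem sameCycle (h : σ.IsSplitRotation c) (hc : c.Coprime (n - 1)) (j : Fin n)
    (hj₀ : (j : ℕ) ≠ 0) (hj : (j : ℕ) < n - 1) (hσj : (σ j : ℕ) = 0) (a b : Fin n) :
    σ.SameCycle a b := by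
  have hsingleton : ∀ y : Fin n, (y : ℕ) ≠ 0 → (y : ℕ) < n - 1 → σ.SameCycle a y := by
    intro y hy₀ hy
    obtain ⟨z, haz, hz⟩ := h.exists_sameCycle_cast_eq (by omega) hc a (y : ℕ)
    rwa [Fin.eq_of_natCast_zmod_pred_eq hz hy₀ hy] at haz
  have hzero : ∀ y : Fin n, (y : ℕ) = 0 → σ.SameCycle a y := by
    intro y hy
    rw [show y = σ j from Fin.ext (by omega)]
    exact sameCycle_apply_right.2 (hsingleton j hj₀ hj)
  by_cases hb₀ : (b : ℕ) = 0
  · exact hzero b hb₀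
  by_cases hb : (b : ℕ) < n - 1
  · exact hsingleton b hb₀ hb
  · let z : Fin n := ⟨0, by omega⟩
    rw [show b = σ z from Fin.ext (by rw [h.val_apply_of_val_eq_zero z rfl]; omega)]
    exact sameCycle_apply_right.2 (hzero z rfl)

end Equiv.Perm.IsSplitRotation

theorem stmt_0_general (n k : ℕ) (hk : 2 ≤ k) (hk' : k ≤ n - 1)
    (ρ : Equiv.Perm (Fin n))
    (hρ : ∀ i : Fin n, ((ρ i : ℕ) + 1) =
      if (i : ℕ) + 1 = 1 then n
      else if (i : ℕ) + 1 ≤ k - 1 then (i : ℕ) + 1 + (n - k)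
      else (i : ℕ) + 1 - (k - 1)) :
    (∀ a b : Fin n, ∃ m : ℕ, (ρ ^ m) a = b) ↔ Nat.gcd (n - k) (n - 1) = 1 := by
  have hrot : ρ.IsSplitRotation (n - k) := by
    refine ⟨fun x hx => by have := hρ x; rw [if_pos (by omega)] at this; omega, fun x hx => ?_⟩
    have hρx := hρ x
    rw [if_neg (by omega)] at hρx
    split_ifs at hρx with hxk
    · rw [← Nat.cast_add, show (ρ x : ℕ) = x + (n - k) by omega]
    · rw [← Nat.cast_add, show (x : ℕ) + (n - k) = (ρ x : ℕ) + (n - 1) by omega, Nat.cast_add,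
        ZMod.natCast_self, add_zero]
  have hρj : (ρ ⟨k - 1, by omega⟩ : ℕ) = 0 := by
    have := hρ ⟨k - 1, by omega⟩
    dsimp only at this
    rw [if_neg (by omega), if_neg (by omega)] at this
    omega
  refine ⟨hrot.coprime_of_exists_pow_apply_eq (by omega), fun hc a b => ?_⟩
  exact Equiv.Perm.SameCycle.exists_nat_pow_eq
    (hrot.sameCycle hc _ (by dsimp only; omega) (by dsimp only; omega) hρj a b)

/-- The permutation ρ_e(n,k) ∈ S_n (elements of `Fin n` labelled `i+1 ∈ {1,…,n}`)
is an n-cycle (acts transitively) iff gcd(n-k, n-1) = 1. -/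
theorem stmt_0 (n k : ℕ) (hn : 3 ≤ n) (hk : 2 ≤ k) (hk' : k ≤ n - 1)
    (ρ : Equiv.Perm (Fin n))
    (hρ : ∀ i : Fin n, ((ρ i : ℕ) + 1) =
      if (i : ℕ) + 1 = 1 then n
      else if (i : ℕ) + 1 ≤ k - 1 then (i : ℕ) + 1 + (n - k)
      else (i : ℕ) + 1 - (k - 1)) :
    (∀ a b : Fin n, ∃ m : ℕ, (ρ ^ m) a = b) ↔ Nat.gcd (n - k) (n - 1) = 1 :=
  stmt_0_general n k hk hk' ρ hρ
end

section
/- Each companion polynomial q_g (g ≥ 2) is monic of degree g and has a real root α_g > 2. -/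
/-!
Since `t + t⁻¹ ~ t` as `t → ∞`, the identity `d_g(t) = t^g q(t + t⁻¹)` makes the real
polynomial functions `d_g` and `X^g q` asymptotically equivalent, which forces the two polynomials
to share their degree and leading coefficient; hence `q` is monic of degree `g`. At `t = 1` the
identity gives `q(2) = d_g(1) = -1`, while the monic `q` is positive far to the right, so the
intermediate value theorem yields a root beyond `2`.
-/

open Polynomial

/-- d_g(t) = t^{2g} + 1 + 3·Σ_{i=1}^{2g-1}(-1)^i t^i. -/
noncomputable def dPoly (g : ℕ) : Polynomial ℤ :=
  X ^ (2 * g) + 1 + 3 * ∑ i ∈ Finset.Icc 1 (2 * g - 1), (-1 : Polynomial ℤ) ^ i * X ^ i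

open Filter Asymptotics

namespace Polynomial

theorem isEquivalent_atTop_eval_add_inv (p : ℝ[X]) :
    (fun t : ℝ => p.eval (t + t⁻¹)) ~[atTop] p.eval := by
  have hadd : (fun t : ℝ => t + t⁻¹) ~[atTop] id :=
    IsEquivalent.refl.add_isLittleO
      (((isLittleO_one_iff ℝ).2 tendsto_inv_atTop_zero).trans (isLittleO_const_id_atTop 1))
  have hT : Tendsto (fun t : ℝ => t + t⁻¹) atTop atTop :=
    tendsto_id.atTop_add tendsto_inv_atTop_zero
  refine ((p.isEquivalent_atTop_lead.comp_tendsto hT).trans ?_).trans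
    p.isEquivalent_atTop_lead.symm
  exact IsEquivalent.refl.mul (hadd.pow _)

theorem degree_sub_lt_of_isEquivalent {P Q : ℝ[X]} (h : P.eval ~[atTop] Q.eval) (hQ : Q ≠ 0) :
    (P - Q).degree < Q.degree := by
  rw [← div_tendsto_atTop_zero_iff_degree_lt _ _ hQ]
  simpa using h.isLittleO.tendsto_div_nhds_zero

theorem natDegree_eq_and_leadingCoeff_eq_of_isEquivalent {P Q : ℝ[X]}
    (h : P.eval ~[atTop] Q.eval) (hQ : Q ≠ 0) :
    P.natDegree = Q.natDegree ∧ P.leadingCoeff = Q.leadingCoeff := by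
  have hlt := degree_sub_lt_of_isEquivalent h hQ
  rw [← add_sub_cancel Q P]
  exact ⟨natDegree_add_eq_left_of_degree_lt hlt, leadingCoeff_add_of_degree_lt' hlt⟩

theorem monic_and_natDegree_eq_of_eval_eq_pow_mul_eval_add_inv {d q : ℝ[X]} {g : ℕ}
    (hd : d.Monic) (hdeg : d.natDegree = 2 * g)
    (h : ∀ t : ℝ, t ≠ 0 → d.eval t = t ^ g * q.eval (t + t⁻¹)) :
    q.Monic ∧ q.natDegree = g := by
  have hequiv : (X ^ g * q).eval ~[atTop] d.eval := by
    have hmul := (IsEquivalent.refl (u := fun t : ℝ => t ^ g)).mul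
      (isEquivalent_atTop_eval_add_inv q)
    refine (hmul.symm.congr_left (.of_eq ?_)).congr_right ?_
    · ext t
      simp
    · filter_upwards [eventually_ne_atTop 0] with t ht using (h t ht).symm
  obtain ⟨hnat, hlc⟩ := natDegree_eq_and_leadingCoeff_eq_of_isEquivalent hequiv hd.ne_zero
  have hmon : q.Monic := by
    rw [Monic.def]
    simpa [hd.leadingCoeff] using hlc
  rw [(monic_X_pow g).natDegree_mul hmon, natDegree_X_pow, hdeg] at hnat
  exact ⟨hmon, by omega⟩

theorem exists_isRoot_gt_of_eval_neg {p : ℝ[X]} (hp : 0 ≤ p.leadingCoeff) {a : ℝ}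
    (ha : p.eval a < 0) : ∃ x, a < x ∧ p.IsRoot x := by
  have hdeg : 0 < p.degree := by
    by_contra! h
    rw [eq_C_of_degree_le_zero h] at ha hp
    simp only [eval_C, leadingCoeff_C] at ha hp
    linarith
  obtain ⟨b, hab, hb⟩ := ((eventually_gt_atTop a).and
    ((tendsto_atTop_of_leadingCoeff_nonneg p hdeg hp).eventually_gt_atTop 0)).exists
  obtain ⟨x, hx, hroot⟩ := intermediate_value_Ioo hab.le p.continuous.continuousOn ⟨ha, hb⟩
  exact ⟨x, hx.1, hroot⟩

end Polynomial

theorem Finset.sum_Icc_one_neg_one_pow_two_mul_add_one {R : Type*} [Ring R] (k : ℕ) :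
    ∑ i ∈ Finset.Icc 1 (2 * k + 1), (-1 : R) ^ i = -1 := by
  induction k with
  | zero => simp
  | succ k ih =>
    rw [show 2 * (k + 1) + 1 = 2 * k + 1 + 1 + 1 by ring, Finset.sum_Icc_succ_top (by omega),
      Finset.sum_Icc_succ_top (by omega), ih]
    simp [pow_succ, pow_mul]

lemma degree_dPoly_sub_lt {g : ℕ} (hg : 1 ≤ g) :
    (dPoly g - X ^ (2 * g)).degree < ↑(2 * g) := by
  have htail : (dPoly g - X ^ (2 * g)).natDegree ≤ 2 * g - 1 := by
    rw [dPoly, add_assoc, add_sub_cancel_left]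
    refine natDegree_add_le_of_degree_le (by simp) ?_
    refine (natDegree_mul_le_of_le (natDegree_ofNat 3).le
      (natDegree_sum_le_of_forall_le _ _ fun i hi => ?_)).trans_eq (zero_add _)
    refine (natDegree_mul_le_of_le (m := 0) (by simp) (natDegree_X_pow_le i)).trans ?_
    simpa using (Finset.mem_Icc.1 hi).2
  exact (degree_le_of_natDegree_le htail).trans_lt
    (by exact_mod_cast (by omega : 2 * g - 1 < 2 * g))

lemma dPoly_monic {g : ℕ} (hg : 1 ≤ g) : (dPoly g).Monic := by
  simpa using monic_X_pow_add (degree_dPoly_sub_lt hg)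

lemma natDegree_dPoly {g : ℕ} (hg : 1 ≤ g) : (dPoly g).natDegree = 2 * g := by
  rw [← add_sub_cancel (X ^ (2 * g)) (dPoly g), natDegree_add_eq_left_of_degree_lt,
    natDegree_X_pow]
  simpa using degree_dPoly_sub_lt hg

lemma eval_one_dPoly {g : ℕ} (hg : 1 ≤ g) : (dPoly g).eval 1 = -1 := by
  obtain ⟨k, rfl⟩ : ∃ k, g = k + 1 := ⟨g - 1, by omega⟩
  simp only [dPoly, eval_add, eval_pow, eval_X, one_pow, eval_one, eval_mul, eval_finsetSum,
    eval_neg, mul_one, eval_ofNat]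
  rw [show 2 * (k + 1) - 1 = 2 * k + 1 by omega, Finset.sum_Icc_one_neg_one_pow_two_mul_add_one]
  norm_num

/-- For g ≥ 2, each companion polynomial q_g is monic of degree g and has a real
root α_g > 2. -/
theorem stmt_15 (g : ℕ) (hg : 2 ≤ g) (q : Polynomial ℤ)
    (hq : ∀ t : ℝ, t ≠ 0 →
      Polynomial.aeval t (dPoly g) = t ^ g * Polynomial.aeval (t + t⁻¹) q) :
    q.Monic ∧ q.natDegree = g ∧ ∃ α : ℝ, 2 < α ∧ Polynomial.aeval α q = 0 := by
  have hinj := FaithfulSMul.algebraMap_injective ℤ ℝ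
  set qr := q.map (algebraMap ℤ ℝ)
  have hsubst : ∀ t : ℝ, t ≠ 0 →
      ((dPoly g).map (algebraMap ℤ ℝ)).eval t = t ^ g * qr.eval (t + t⁻¹) := by
    simpa only [qr, eval_map_algebraMap] using hq
  obtain ⟨hmon, hnat⟩ := monic_and_natDegree_eq_of_eval_eq_pow_mul_eval_add_inv
    ((dPoly_monic (by omega)).map _)
    (by rw [(dPoly_monic (by omega)).natDegree_map, natDegree_dPoly (by omega)]) hsubst
  have hq2 : qr.eval 2 = -1 := by
    have h1 := hsubst 1 one_ne_zero
    rw [eval_one_map, eval_one_dPoly (by omega)] at h1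
    norm_num at h1
    linarith
  obtain ⟨α, hα, hroot⟩ := exists_isRoot_gt_of_eval_neg (hmon.leadingCoeff ▸ zero_le_one)
    (hq2 ▸ neg_one_lt_zero)
  refine ⟨monic_of_injective hinj hmon, ?_, α, hα, by rwa [← eval_map_algebraMap]⟩
  rwa [natDegree_map_eq_of_injective hinj] at hnat
end
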